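/- Let (M,g) be a perfect fluid space-time of dimension n ≥ 4 with R_{kl} = A g_{kl} + B u_k u_l, u unit timelike, and ∇_m C_{jkl}{}^m = 0. Then the 1-form B u is closed: ∇_k(B u_j) = ∇_j(B u_k). -/

import Mathlib

/-!
Write `γ = (n-2)A + B`. Contracting the Codazzi form of `∇_m C_{jkl}{}^m = 0` with `u^j` shows
that the curl `∇_k(B u_l) - ∇_l(B u_k)` equals `P_k u_l - P_l u_k` with `P = ∇γ / (2(n-1))`.
Contracting once more with `u^k` and subtracting the contracted Bianchi identity eliminates the
acceleration `u^k ∇_k u_l` and leaves `(n-2) P = λ u`, so the curl vanishes.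
-/

open Finset

section

variable {ι : Type*} [Fintype ι]

/-- `∇_k R_{jl}` for `R_{jl} = A g_{jl} + B u_j u_l` and a parallel metric, where `DA k`, `DB k`,
`Du k j` stand for `∇_k A`, `∇_k B`, `∇_k u_j`. -/
def perfectFluidRicciDeriv (g : ι → ι → ℝ) (B : ℝ) (DA DB u : ι → ℝ) (Du : ι → ι → ℝ)
    (k j l : ι) : ℝ :=
  DA k * g j l + DB k * u j * u l + B * (Du k j * u l + u j * Du k l)

theorem sum_raise_mul_metric [DecidableEq ι] {g ginv : ι → ι → ℝ}
    (hginv : ∀ i j, ∑ m, ginv i m * g m j = if i = j then 1 else 0)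
    (hsymm : ∀ i j, ginv i j = ginv j i) (v : ι → ℝ) (l : ι) :
    ∑ i, (∑ m, ginv i m * v m) * g i l = v l := by
  calc ∑ i, (∑ m, ginv i m * v m) * g i l = ∑ m, v m * ∑ i, ginv m i * g i l := by
        simp only [sum_mul, mul_sum]
        rw [sum_comm]
        exact sum_congr rfl fun m _ => sum_congr rfl fun i _ => by rw [hsymm]; ring
    _ = v l := by simp [hginv]

variable {g : ι → ι → ℝ} {B : ℝ} {DA DB u uu : ι → ℝ} {Du : ι → ι → ℝ}

theorem sum_mul_perfectFluidRicciDeriv_middle (hug : ∀ l, ∑ i, uu i * g i l = u l)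
    (huu : ∑ i, uu i * u i = -1) (huDu : ∀ k, ∑ i, uu i * Du k i = 0) (k l : ι) :
    ∑ j, uu j * perfectFluidRicciDeriv g B DA DB u Du k j l = (DA k - DB k) * u l - B * Du k l := by
  have expand : ∑ j, uu j * perfectFluidRicciDeriv g B DA DB u Du k j l =
      DA k * ∑ j, uu j * g j l + DB k * u l * ∑ j, uu j * u j
        + B * u l * ∑ j, uu j * Du k j + B * Du k l * ∑ j, uu j * u j := by
    simp only [mul_sum, ← sum_add_distrib]
    exact sum_congr rfl fun j _ => by unfold perfectFluidRicciDeriv; ring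
  rw [expand, hug, huu, huDu]
  ring

theorem perfectFluid_curl_eq_of_codazzi (hug : ∀ l, ∑ i, uu i * g i l = u l)
    (huu : ∑ i, uu i * u i = -1) (huDu : ∀ k, ∑ i, uu i * Du k i = 0) {c : ℝ} {Dr : ι → ℝ}
    (hcodazzi : ∀ k l j, perfectFluidRicciDeriv g B DA DB u Du k j l
      - perfectFluidRicciDeriv g B DA DB u Du l j k = c * (g j l * Dr k - g j k * Dr l))
    (k l : ι) :
    DB k * u l + B * Du k l - (DB l * u k + B * Du l k)
      = (DA k - c * Dr k) * u l - (DA l - c * Dr l) * u k := by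
  have hcontract : ∑ j, uu j * (c * (g j l * Dr k - g j k * Dr l))
      = c * ((∑ j, uu j * g j l) * Dr k - (∑ j, uu j * g j k) * Dr l) := by
    simp only [sum_mul, mul_sum, ← sum_sub_distrib]
    exact sum_congr rfl fun j _ => by ring
  have h : ∑ j, uu j * (perfectFluidRicciDeriv g B DA DB u Du k j l
      - perfectFluidRicciDeriv g B DA DB u Du l j k)
      = ∑ j, uu j * (c * (g j l * Dr k - g j k * Dr l)) :=
    sum_congr rfl fun j _ => by rw [hcodazzi]
  rw [hcontract, hug, hug] at h
  simp only [mul_sub, sum_sub_distrib, sum_mul_perfectFluidRicciDeriv_middle hug huu huDu] at h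
  linear_combination -h

theorem perfectFluid_sum_mul_curl (huu : ∑ i, uu i * u i = -1)
    (huDu : ∀ k, ∑ i, uu i * Du k i = 0) {P : ι → ℝ} {l : ι}
    (hcurl : ∀ k, DB k * u l + B * Du k l - (DB l * u k + B * Du l k) = P k * u l - P l * u k) :
    (∑ k, uu k * DB k) * u l + B * ∑ k, uu k * Du k l + DB l = (∑ k, uu k * P k) * u l + P l := by
  have h : ∑ k, uu k * (DB k * u l + B * Du k l - (DB l * u k + B * Du l k))
      = ∑ k, uu k * (P k * u l - P l * u k) :=
    sum_congr rfl fun k _ => by rw [hcurl]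
  have hlhs : ∑ k, uu k * (DB k * u l + B * Du k l - (DB l * u k + B * Du l k))
      = (∑ k, uu k * DB k) * u l + B * ∑ k, uu k * Du k l - DB l * ∑ k, uu k * u k
        - B * ∑ k, uu k * Du l k := by
    simp only [sum_mul, mul_sum, ← sum_add_distrib, ← sum_sub_distrib]
    exact sum_congr rfl fun k _ => by ring
  have hrhs : ∑ k, uu k * (P k * u l - P l * u k)
      = (∑ k, uu k * P k) * u l - P l * ∑ k, uu k * u k := by
    simp only [sum_mul, mul_sum, ← sum_sub_distrib]
    exact sum_congr rfl fun k _ => by ring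
  rw [hlhs, hrhs, huu, huDu] at h
  linear_combination h

theorem sum_sum_inv_mul_perfectFluidRicciDeriv [DecidableEq ι] {ginv : ι → ι → ℝ}
    (hginv : ∀ i j, ∑ m, ginv i m * g m j = if i = j then 1 else 0)
    (hraise : ∀ a, ∑ m, ginv a m * u m = uu a) (j : ι) :
    ∑ a, ∑ m, ginv a m * perfectFluidRicciDeriv g B DA DB u Du a m j
      = DA j + ((∑ a, uu a * DB a) + B * ∑ a, ∑ m, ginv a m * Du a m) * u j
        + B * ∑ a, uu a * Du a j := by
  have inner : ∀ a, ∑ m, ginv a m * perfectFluidRicciDeriv g B DA DB u Du a m j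
      = DA a * (∑ m, ginv a m * g m j) + (∑ m, ginv a m * u m) * (DB a * u j + B * Du a j)
        + B * u j * ∑ m, ginv a m * Du a m := by
    intro a
    simp only [mul_sum, sum_mul, ← sum_add_distrib]
    exact sum_congr rfl fun m _ => by unfold perfectFluidRicciDeriv; ring
  calc ∑ a, ∑ m, ginv a m * perfectFluidRicciDeriv g B DA DB u Du a m j
      = ∑ a, (DA a * (if a = j then 1 else 0) + uu a * DB a * u j + B * (uu a * Du a j)
          + B * u j * ∑ m, ginv a m * Du a m) :=
        sum_congr rfl fun a _ => by rw [inner, hginv, hraise]; ring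
    _ = _ := by
        simp only [sum_add_distrib, mul_ite, mul_one, mul_zero, sum_ite_eq', mem_univ, if_true,
          ← sum_mul, ← mul_sum]
        ring

/-- `DA l - (n DA l - DB l) / (2(n-1))` is `∇_l γ / (2(n-1))`. -/
theorem perfectFluid_exists_gammaGrad_eq_mul [DecidableEq ι] {ginv : ι → ι → ℝ} {n : ℝ}
    (hn1 : n ≠ 1) (hn2 : n ≠ 2)
    (hginv : ∀ i j, ∑ m, ginv i m * g m j = if i = j then 1 else 0)
    (hraise : ∀ a, ∑ m, ginv a m * u m = uu a)
    (huu : ∑ i, uu i * u i = -1) (huDu : ∀ k, ∑ i, uu i * Du k i = 0)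
    (hcurl : ∀ k l, DB k * u l + B * Du k l - (DB l * u k + B * Du l k)
      = (DA k - 1 / (2 * (n - 1)) * (n * DA k - DB k)) * u l
        - (DA l - 1 / (2 * (n - 1)) * (n * DA l - DB l)) * u k)
    (hbianchi : ∀ j, ∑ a, ∑ m, ginv a m * perfectFluidRicciDeriv g B DA DB u Du a m j
      = 1 / 2 * (n * DA j - DB j)) :
    ∃ ν : ℝ, ∀ l, DA l - 1 / (2 * (n - 1)) * (n * DA l - DB l) = ν * u l := by
  have hB l := perfectFluid_sum_mul_curl huu huDu (hcurl · l)
  have hC j := (sum_sum_inv_mul_perfectFluidRicciDeriv hginv hraise j).symm.trans (hbianchi j)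
  refine ⟨((∑ k, uu k * (DA k - 1 / (2 * (n - 1)) * (n * DA k - DB k)))
    + B * ∑ a, ∑ m, ginv a m * Du a m) / (n - 2), fun l => ?_⟩
  have hc : 1 / (2 * (n - 1)) * (2 * (n - 1)) = 1 :=
    one_div_mul_cancel (mul_ne_zero two_ne_zero (sub_ne_zero.2 hn1))
  rw [div_mul_eq_mul_div _ (n - 2)]
  refine eq_div_of_mul_eq (sub_ne_zero.2 hn2) ?_
  linear_combination hB l - hC l - (n * DA l - DB l) / 2 * hc

end

theorem perfectFluid_Bu_closed_general
    (n : ℕ) (hn : 4 ≤ n) (M : Type*)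
    (g ginv : M → Fin n → Fin n → ℝ)
    (B : M → ℝ) (DA DB : M → Fin n → ℝ)
    (u : M → Fin n → ℝ) (Du : M → Fin n → Fin n → ℝ)
    (hginv : ∀ x i j, ∑ m, ginv x i m * g x m j = if i = j then (1:ℝ) else 0)
    (hginvsymm : ∀ x i j, ginv x i j = ginv x j i)
    -- u is a unit timelike vector field: u^j u_j = -1
    (hunit : ∀ x, ∑ i, ∑ j, ginv x i j * u x i * u x j = -1)
    -- u has constant length, hence u^l ∇_k u_l = 0
    (hDu : ∀ x k, ∑ l, ∑ m, ginv x l m * u x m * Du x k l = 0)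
    -- contracted Bianchi identity ∇^m R_{jm} = (1/2)∇_j R
    (hBianchi : ∀ x j, ∑ a, ∑ m, ginv x a m *
        (DA x a * g x m j + DB x a * u x m * u x j
          + B x * (Du x a m * u x j + u x m * Du x a j))
      = (1/2) * ((n:ℝ) * DA x j - DB x j))
    -- ∇_m C_{jkl}{}^m = 0, in its equivalent Codazzi form for the Ricci tensor
    (hWeyl : ∀ x k l j,
        (DA x k * g x j l + DB x k * u x j * u x l
          + B x * (Du x k j * u x l + u x j * Du x k l))
        - (DA x l * g x j k + DB x l * u x j * u x k
          + B x * (Du x l j * u x k + u x j * Du x l k))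
      = (1/(2*((n:ℝ) - 1))) * (g x j l * ((n:ℝ) * DA x k - DB x k)
          - g x j k * ((n:ℝ) * DA x l - DB x l))) :
    -- conclusion: ∇_k(B u_j) = ∇_j(B u_k)
    ∀ x k j, DB x k * u x j + B x * Du x k j = DB x j * u x k + B x * Du x j k := by
  intro x k j
  have hn4 : (4 : ℝ) ≤ n := by exact_mod_cast hn
  set uu : Fin n → ℝ := fun i => ∑ m, ginv x i m * u x m
  have huu : ∑ i, uu i * u x i = -1 := by
    rw [← hunit x]
    simp only [uu, sum_mul]
    exact sum_congr rfl fun i _ => sum_congr rfl fun m _ => by ring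
  have huDu : ∀ k, ∑ i, uu i * Du x k i = 0 := by simpa only [uu, sum_mul] using hDu x
  have hcurl := perfectFluid_curl_eq_of_codazzi (sum_raise_mul_metric (hginv x) (hginvsymm x) (u x))
    huu huDu (Dr := fun i => n * DA x i - DB x i) (hWeyl x)
  obtain ⟨ν, hν⟩ := perfectFluid_exists_gammaGrad_eq_mul (by linarith) (by linarith) (hginv x)
    (fun _ => rfl) huu huDu hcurl (hBianchi x)
  linear_combination hcurl k j + u x j * hν k - u x k * hν j

theorem perfectFluid_Bu_closed
    (n : ℕ) (hn : 4 ≤ n) (M : Type*)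
    (g ginv : M → Fin n → Fin n → ℝ)
    (A B : M → ℝ) (DA DB : M → Fin n → ℝ)
    (u : M → Fin n → ℝ) (Du : M → Fin n → Fin n → ℝ)
    (hg : ∀ x i j, g x i j = g x j i)
    (hginv : ∀ x i j, ∑ m, ginv x i m * g x m j = if i = j then (1:ℝ) else 0)
    (hginvsymm : ∀ x i j, ginv x i j = ginv x j i)
    -- u is a unit timelike vector field: u^j u_j = -1
    (hunit : ∀ x, ∑ i, ∑ j, ginv x i j * u x i * u x j = -1)
    -- u has constant length, hence u^l ∇_k u_l = 0
    (hDu : ∀ x k, ∑ l, ∑ m, ginv x l m * u x m * Du x k l = 0)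
    -- contracted Bianchi identity ∇^m R_{jm} = (1/2)∇_j R
    (hBianchi : ∀ x j, ∑ a, ∑ m, ginv x a m *
        (DA x a * g x m j + DB x a * u x m * u x j
          + B x * (Du x a m * u x j + u x m * Du x a j))
      = (1/2) * ((n:ℝ) * DA x j - DB x j))
    -- ∇_m C_{jkl}{}^m = 0, in its equivalent Codazzi form for the Ricci tensor
    (hWeyl : ∀ x k l j,
        (DA x k * g x j l + DB x k * u x j * u x l
          + B x * (Du x k j * u x l + u x j * Du x k l))
        - (DA x l * g x j k + DB x l * u x j * u x k
          + B x * (Du x l j * u x k + u x j * Du x l k))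
      = (1/(2*((n:ℝ) - 1))) * (g x j l * ((n:ℝ) * DA x k - DB x k)
          - g x j k * ((n:ℝ) * DA x l - DB x l))) :
    -- conclusion: ∇_k(B u_j) = ∇_j(B u_k)
    ∀ x k j, DB x k * u x j + B x * Du x k j = DB x j * u x k + B x * Du x j k :=
  perfectFluid_Bu_closed_general n hn M g ginv B DA DB u Du hginv hginvsymm hunit hDu hBianchi hWeyl
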